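/- Let A be a commutative ring with identity, let n ≥ 1, let h_0, …, h_{n−1} ∈ HA and c_0, …, c_{n−1} ∈ A, and let L(h) = ∂ⁿ(h) + Σ_{i=0}^{n−1} h_i·∂ⁱ(h). Then the element y ∈ HA determined recursively by π_i(y) = c_i for i = 0,1,…,n−1 and π_{n+m}(y) = −Σ_{i=0}^{n−1} Σ_{j=0}^{m} C(m,j)·π_j(h_i)·π_{m−j+i}(y) for all m ∈ ℕ, is the unique element of HA satisfying L(y) = 0 and π_i(y) = c_i for i = 0,1,…,n−1. -/

import Mathlib

open scoped BigOperators

set_option linter.unusedSectionVars false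

/-- The ring of Hurwitz series over `R`: all sequences `ℕ → R`, with termwise addition and
the Hurwitz (binomial-convolution) product. -/
def HS (R : Type*) : Type _ := ℕ → R

namespace HS

variable {R : Type*} [CommRing R]

instance : AddCommGroup (HS R) := Pi.addCommGroup

instance {S : Type*} [Semiring S] [Module S R] : Module S (HS R) :=
  Pi.module ℕ (fun _ => R) S

@[simp] theorem add_apply (a b : HS R) (n : ℕ) : (a + b) n = a n + b n := rfl
@[simp] theorem zero_apply (n : ℕ) : (0 : HS R) n = 0 := rfl
@[simp] theorem smul_apply {S : Type*} [Semiring S] [Module S R] (c : S) (a : HS R) (n : ℕ) :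
    (c • a) n = c • a n := rfl

instance : Mul (HS R) :=
  ⟨fun a b n => ∑ j ∈ Finset.range (n + 1), (n.choose j : R) * a j * b (n - j)⟩

theorem mul_apply (a b : HS R) (n : ℕ) :
    (a * b) n = ∑ j ∈ Finset.range (n + 1), (n.choose j : R) * a j * b (n - j) := rfl

instance : One (HS R) := ⟨fun n => if n = 0 then 1 else 0⟩

theorem one_apply (n : ℕ) : (1 : HS R) n = if n = 0 then 1 else 0 := rfl

private theorem hmul_comm (a b : HS R) : a * b = b * a := by
  funext n
  rw [mul_apply, mul_apply, ← Finset.sum_range_reflect]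
  refine Finset.sum_congr rfl fun j hj => ?_
  have hj' : j ≤ n := Nat.lt_succ_iff.mp (Finset.mem_range.mp hj)
  have h1 : n + 1 - 1 - j = n - j := by omega
  rw [h1, Nat.choose_symm hj', Nat.sub_sub_self hj']
  ring

private theorem hone_mul (a : HS R) : 1 * a = a := by
  funext n
  rw [mul_apply]
  rw [Finset.sum_eq_single 0]
  · simp [one_apply]
  · intro j hj hj0
    simp [one_apply, hj0]
  · intro h
    exact absurd (Finset.mem_range.mpr (Nat.succ_pos n)) h

private theorem hmul_assoc (a b c : HS R) : a * b * c = a * (b * c) := by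
  funext n
  rw [mul_apply, mul_apply]
  simp_rw [mul_apply, Finset.mul_sum]
  simp_rw [Finset.sum_mul]
  rw [Finset.sum_sigma', Finset.sum_sigma']
  refine Finset.sum_nbij' (fun x => ⟨x.2, x.1 - x.2⟩) (fun x => ⟨x.1 + x.2, x.1⟩)
    ?_ ?_ ?_ ?_ ?_
  · rintro ⟨p, i⟩ h
    simp only [Finset.mem_sigma, Finset.mem_range] at h ⊢
    omega
  · rintro ⟨i, j⟩ h
    simp only [Finset.mem_sigma, Finset.mem_range] at h ⊢
    omega
  · rintro ⟨p, i⟩ h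
    simp only [Finset.mem_sigma, Finset.mem_range] at h
    dsimp only
    exact congrArg (fun m => (⟨m, i⟩ : Σ _ : ℕ, ℕ)) (by omega)
  · rintro ⟨i, j⟩ h
    simp only [Finset.mem_sigma, Finset.mem_range] at h
    dsimp only
    exact congrArg (fun m => (⟨i, m⟩ : Σ _ : ℕ, ℕ)) (by omega)
  · rintro ⟨p, i⟩ h
    simp only [Finset.mem_sigma, Finset.mem_range] at h
    have hip : i ≤ p := by omega
    have hpn : p ≤ n := by omega
    have h2 : n - i - (p - i) = n - p := by omega
    have h3 : (n.choose p : R) * (p.choose i : R)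
        = (n.choose i : R) * ((n - i).choose (p - i) : R) := by
      rw [← Nat.cast_mul, ← Nat.cast_mul, Nat.choose_mul (n := n) hip]
    simp only [h2]
    calc ((n.choose p : R) * ((p.choose i : R) * a i * b (p - i)) * c (n - p))
        = ((n.choose p : R) * (p.choose i : R)) * (a i * b (p - i) * c (n - p)) := by ring
      _ = ((n.choose i : R) * ((n - i).choose (p - i) : R)) * (a i * b (p - i) * c (n - p)) := by
          rw [h3]
      _ = (n.choose i : R) * a i * (((n - i).choose (p - i) : R) * b (p - i) * c (n - p)) := by
          ring

instance : CommRing (HS R) :=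
  { (inferInstance : AddCommGroup (HS R)) with
    mul := (· * ·)
    one := (1 : HS R)
    mul_assoc := hmul_assoc
    one_mul := hone_mul
    mul_one := fun a => by rw [hmul_comm]; exact hone_mul a
    left_distrib := fun a b c => by
      funext n
      simp only [mul_apply, add_apply]
      rw [← Finset.sum_add_distrib]
      exact Finset.sum_congr rfl fun j _ => by ring
    right_distrib := fun a b c => by
      funext n
      simp only [mul_apply, add_apply]
      rw [← Finset.sum_add_distrib]
      exact Finset.sum_congr rfl fun j _ => by ring
    zero_mul := fun a => by funext n; simp [mul_apply]
    mul_zero := fun a => by funext n; simp [mul_apply]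
    mul_comm := hmul_comm }

/-- The derivation `∂` on Hurwitz series: the left-shift. -/
def D (a : HS R) : HS R := fun n => a (n + 1)

@[simp] theorem D_apply (a : HS R) (n : ℕ) : D a n = a (n + 1) := rfl

/-- The exponential `exp β = (1, β, β², …)`. -/
def hexp (b : R) : HS R := fun n => b ^ n

@[simp] theorem hexp_apply (b : R) (n : ℕ) : hexp b n = b ^ n := rfl

/-- The divided power `x^{[i]}`: the sequence with `1` in position `i` and `0` elsewhere. -/
def dpow (i : ℕ) : HS R := fun n => if n = i then 1 else 0

/-- The constant Hurwitz series `(r, 0, 0, …)`. -/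
def const (r : R) : HS R := fun n => if n = 0 then r else 0

/-- Entrywise map of a Hurwitz series along a map of coefficients. -/
def map {K L : Type*} (f : K → L) (a : HS K) : HS L := fun n => f (a n)

/-- `σ` is a differential automorphism of the subspace `V` of `HS k`:
a `k`-linear automorphism of `V` commuting with the derivation `D`. -/
def IsDiffAut {k : Type*} [Field k] (V : Submodule k (HS k)) (σ : V ≃ₗ[k] V) : Prop :=
  ∀ v w : V, (w : HS k) = D (v : HS k) → (σ w : HS k) = D (σ v : HS k)

end HS

/-- The nilpotent upper Jordan block of size `m` (ones on the superdiagonal). -/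
def jordanBlock (k : Type*) [Field k] (m : ℕ) : Matrix (Fin m) (Fin m) k :=
  Matrix.of fun i j => if (i : ℕ) + 1 = (j : ℕ) then 1 else 0

/-- The centralizer of a matrix `A` inside `GL(m, k)`, as a set of matrices. -/
def matCent {k : Type*} [Field k] {m : ℕ} (A : Matrix (Fin m) (Fin m) k) :
    Set (Matrix (Fin m) (Fin m) k) :=
  {T | IsUnit T ∧ A * T = T * A}

/-- The group `U(m, k)` of upper triangular matrices in `GL(m, k)` with all diagonal
entries equal to `1`, as a set of matrices. -/
def uniUpper (k : Type*) [Field k] (m : ℕ) : Set (Matrix (Fin m) (Fin m) k) :=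
  {T | IsUnit T ∧ (∀ i, T i i = 1) ∧ ∀ i j : Fin m, (j : ℕ) < (i : ℕ) → T i j = 0}

/-!
Coefficient `m` of `L(w) = ∂ⁿ w + ∑ hᵢ ∂ⁱ w` is
`w_{n+m} + ∑_{i<n} ∑_{j≤m} C(m,j) (hᵢ)_j w_{m-j+i}`, so `L(w) = 0` is exactly the recursion.
Since `m - j + i < n + m`, the recursion expresses each coefficient `w_{n+m}` through earlier
ones, and a strong induction shows that a solution is determined by `w_0, …, w_{n-1}`.
-/

namespace HS

variable {R : Type*} [CommRing R]

def linearDiffOp {n : ℕ} (h : Fin n → HS R) (w : HS R) : HS R :=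
  D^[n] w + ∑ i : Fin n, h i * D^[(i : ℕ)] w

theorem iterate_D_apply (k : ℕ) (a : HS R) (m : ℕ) : D^[k] a m = a (m + k) := by
  induction k generalizing a m with
  | zero => rfl
  | succ k ih => rw [Function.iterate_succ_apply, ih, D_apply, Nat.add_assoc]

theorem finset_sum_apply {ι : Type*} (s : Finset ι) (f : ι → HS R) (m : ℕ) :
    (∑ i ∈ s, f i) m = ∑ i ∈ s, f i m :=
  Finset.sum_apply (M := fun _ => R) m s f

theorem mul_iterate_D_apply (a w : HS R) (k m : ℕ) :
    (a * D^[k] w) m = ∑ j ∈ Finset.range (m + 1), (m.choose j : R) * a j * w (m - j + k) := by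
  simp only [mul_apply, iterate_D_apply]

theorem linearDiffOp_apply {n : ℕ} (h : Fin n → HS R) (w : HS R) (m : ℕ) :
    linearDiffOp h w m = w (n + m) +
      ∑ i : Fin n, ∑ j ∈ Finset.range (m + 1), (m.choose j : R) * h i j * w (m - j + i) := by
  simp only [linearDiffOp, add_apply, finset_sum_apply, mul_iterate_D_apply, iterate_D_apply,
    Nat.add_comm m n]

theorem linearDiffOp_eq_zero_iff {n : ℕ} (h : Fin n → HS R) (w : HS R) :
    linearDiffOp h w = 0 ↔ ∀ m : ℕ, w (n + m) =
      -∑ i : Fin n, ∑ j ∈ Finset.range (m + 1), (m.choose j : R) * h i j * w (m - j + i) := by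
  refine ⟨fun hw m => ?_, fun hw => funext fun m => ?_⟩
  · rw [eq_neg_iff_add_eq_zero, ← linearDiffOp_apply, hw, zero_apply]
  · rw [linearDiffOp_apply, hw, zero_apply, neg_add_cancel]

theorem eq_of_linearDiffOp_eq_zero {n : ℕ} (h : Fin n → HS R) {w v : HS R}
    (hw : linearDiffOp h w = 0) (hv : linearDiffOp h v = 0)
    (hinit : ∀ i : Fin n, w i = v i) : w = v := by
  rw [linearDiffOp_eq_zero_iff] at hw hv
  funext p
  induction p using Nat.strong_induction_on with
  | _ p ih =>
    rcases lt_or_ge p n with hp | hp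
    · exact hinit ⟨p, hp⟩
    · obtain ⟨m, rfl⟩ := Nat.exists_eq_add_of_le hp
      rw [hw m, hv m]
      congr 1
      refine Finset.sum_congr rfl fun i _ => Finset.sum_congr rfl fun j _ => ?_
      rw [ih _ (by omega)]

end HS

theorem stmt_2_general {A : Type*} [CommRing A] (n : ℕ) (h : Fin n → HS A)
    (c : Fin n → A) (y : HS A)
    (hinit : ∀ i : Fin n, y (i : ℕ) = c i)
    (hrec : ∀ m : ℕ, y (n + m) =
      -∑ i : Fin n, ∑ j ∈ Finset.range (m + 1),
        (m.choose j : A) * h i j * y (m - j + (i : ℕ))) :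
    (HS.D^[n] y + ∑ i : Fin n, h i * HS.D^[(i : ℕ)] y = 0) ∧
    (∀ i : Fin n, y (i : ℕ) = c i) ∧
    ∀ z : HS A, HS.D^[n] z + ∑ i : Fin n, h i * HS.D^[(i : ℕ)] z = 0 →
      (∀ i : Fin n, z (i : ℕ) = c i) → z = y := by
  have hy : HS.linearDiffOp h y = 0 := (HS.linearDiffOp_eq_zero_iff h y).mpr hrec
  exact ⟨hy, hinit, fun z hz hzc =>
    HS.eq_of_linearDiffOp_eq_zero h hz hy fun i => (hzc i).trans (hinit i).symm⟩

/-- Over a commutative ring `A`, the element `y ∈ HA` determined recursively by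
`πᵢ(y) = cᵢ` for `i < n` and
`π_{n+m}(y) = -∑_{i<n} ∑_{j≤m} C(m,j) πⱼ(hᵢ) π_{m-j+i}(y)` is the unique element with
`L(y) = 0` and `πᵢ(y) = cᵢ` for `i < n`, where `L(h) = ∂ⁿ h + ∑_{i<n} hᵢ ∂ⁱ h`. -/
theorem stmt_2 {A : Type*} [CommRing A] (n : ℕ) (hn : 1 ≤ n) (h : Fin n → HS A)
    (c : Fin n → A) (y : HS A)
    (hinit : ∀ i : Fin n, y (i : ℕ) = c i)
    (hrec : ∀ m : ℕ, y (n + m) =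
      -∑ i : Fin n, ∑ j ∈ Finset.range (m + 1),
        (m.choose j : A) * h i j * y (m - j + (i : ℕ))) :
    (HS.D^[n] y + ∑ i : Fin n, h i * HS.D^[(i : ℕ)] y = 0) ∧
    (∀ i : Fin n, y (i : ℕ) = c i) ∧
    ∀ z : HS A, HS.D^[n] z + ∑ i : Fin n, h i * HS.D^[(i : ℕ)] z = 0 →
      (∀ i : Fin n, z (i : ℕ) = c i) → z = y :=
  stmt_2_general n h c y hinit hrec
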